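/- Let G be a locally compact Hausdorff group, H a closed subgroup, and μ a left Haar measure on G normalized together with Haar measures on H and G/H so that ∫_G f(t) dt = ∫_{G/H} ∫_H f(ts) ds d(tH) for all continuous compactly supported f (H normal, so G/H is a group). Then for any f ∈ C_c(H) and ξ ∈ C_c(G) ⊂ L²(G), the operator norm estimate ‖∫_H f(t) λ^G_t dt restricted to ξ‖ ≤ ‖∫_H f(t) λ^H_t dt‖ · ‖ξ‖_{L²(G)} holds, where λ^G and λ^H are the left regular representations of G and H. -/

import Mathlib

/-!
Write `Tξ s = ∫_H f t ξ(t⁻¹ s) dt`. On a right coset `H x`, `Tξ(t x)` is `λ^H(f)` applied to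
`η = ξ(· x)`, so the hypothesis bounds `∫_H |Tξ(t x)|² dt` by `C² ∫_H |ξ(t x)|² dt`.
The integration formula is written with left cosets `x H`; since `H` is normal, conjugation by
`x` is a topological automorphism of `H`, which scales its Haar measure by some `c_x ≥ 0`, so
`∫_H F(x t) dt = c_x ∫_H F(t x) dt`. Hence `C² |ξ|² - |Tξ|²` has nonnegative integral over every
coset, and integrating over `G/H` gives the claim.
-/

open MeasureTheory

open scoped NNReal

theorem continuous_integral_mul_of_hasCompactSupport {α X : Type*} [TopologicalSpace α]
    [MeasurableSpace α] [OpensMeasurableSpace α] [TopologicalSpace X]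
    (ν : Measure α) [IsFiniteMeasureOnCompacts ν] {f : α → ℂ} (hf : Continuous f)
    (hfc : HasCompactSupport f) {k : α → X → ℂ} (hk : Continuous (Function.uncurry k)) :
    Continuous fun x => ∫ t, f t * k t x ∂ν := by
  rw [← continuousOn_univ]
  refine continuousOn_integral_of_compact_support hfc ?_ fun x t _ ht => ?_
  · exact ((hf.comp continuous_snd).mul (hk.comp continuous_swap)).continuousOn
  · simp [image_eq_zero_of_notMem_tsupport ht]

theorem exists_integral_comp_continuousMulEquiv_eq_smul {K : Type*} [Group K]
    [TopologicalSpace K] [IsTopologicalGroup K] [MeasurableSpace K]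
    [BorelSpace K] (ν : Measure K) [ν.IsHaarMeasure] (φ : K ≃ₜ* K) :
    ∃ c : ℝ≥0, ∀ F : K → ℝ, Continuous F → HasCompactSupport F →
      ∫ t, F (φ t) ∂ν = c • ∫ t, F t ∂ν := by
  have := φ.isHaarMeasure_map ν
  refine ⟨Measure.haarScalarFactor (ν.map φ) ν, fun F hF hFc => ?_⟩
  rw [← integral_map (map_continuous φ).aemeasurable hF.aestronglyMeasurable,
    Measure.integral_isMulLeftInvariant_eq_smul_of_hasCompactSupport (ν.map φ) ν hF hFc,
    integral_smul_nnreal_measure]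

section Subgroup

variable {G : Type*} [Group G] [TopologicalSpace G] [IsTopologicalGroup G]

theorem hasCompactSupport_integral_mul_inv_mul {H : Subgroup G} [MeasurableSpace H]
    (ν : Measure H) {f : H → ℂ} (hfc : HasCompactSupport f) {ξ : G → ℂ}
    (hξc : HasCompactSupport ξ) :
    HasCompactSupport fun s => ∫ t, f t * ξ ((t : G)⁻¹ * s) ∂ν := by
  refine HasCompactSupport.of_support_subset_isCompact
    ((hfc.image continuous_subtype_val).mul hξc) fun s hs => ?_
  obtain ⟨t, ht⟩ := exists_ne_zero_of_integral_ne_zero hs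
  obtain ⟨hft, hξt⟩ := mul_ne_zero_iff.1 ht
  exact ⟨t, ⟨t, subset_tsupport f hft, rfl⟩, _, subset_tsupport ξ hξt, mul_inv_cancel_left _ _⟩

theorem continuous_integral_mul_inv_mul {H : Subgroup G} [MeasurableSpace H]
    [OpensMeasurableSpace H] (ν : Measure H) [IsFiniteMeasureOnCompacts ν] {f : H → ℂ}
    (hf : Continuous f) (hfc : HasCompactSupport f) {ξ : G → ℂ} (hξ : Continuous ξ) :
    Continuous fun s => ∫ t, f t * ξ ((t : G)⁻¹ * s) ∂ν :=
  continuous_integral_mul_of_hasCompactSupport ν hf hfc (k := fun t s => ξ ((t : G)⁻¹ * s))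
    (hξ.comp ((continuous_subtype_val.comp continuous_fst).inv.mul continuous_snd))

theorem HasCompactSupport.comp_subtype_mul_right {H : Subgroup G} (hH : IsClosed (H : Set G))
    {M : Type*} [Zero M] {F : G → M} (hF : HasCompactSupport F) (x : G) :
    HasCompactSupport fun t : H => F (t * x) :=
  (hF.comp_homeomorph (Homeomorph.mulRight x)).comp_isClosedEmbedding
    hH.isClosedEmbedding_subtypeVal

def MulAut.continuousConjNormal (H : Subgroup G) [H.Normal] (x : G) : H ≃ₜ* H where
  toMulEquiv := MulAut.conjNormal x
  continuous_toFun := continuous_induced_rng.2 <| by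
    simp only [Function.comp_def, MulEquiv.toEquiv_eq_coe, Equiv.toFun_as_coe,
      MulEquiv.coe_toEquiv, MulAut.conjNormal_apply]
    fun_prop
  continuous_invFun := continuous_induced_rng.2 <| by
    simp only [Function.comp_def, MulEquiv.toEquiv_eq_coe, Equiv.invFun_as_coe,
      MulEquiv.coe_toEquiv_symm, MulAut.conjNormal_symm_apply]
    fun_prop

theorem exists_integral_mul_left_eq_smul_integral_mul_right {H : Subgroup G}
    (hHc : IsClosed (H : Set G)) [H.Normal] [MeasurableSpace H] [BorelSpace H]
    (ν : Measure H) [ν.IsHaarMeasure] (x : G) :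
    ∃ c : ℝ≥0, ∀ F : G → ℝ, Continuous F → HasCompactSupport F →
      ∫ t : H, F (x * t) ∂ν = c • ∫ t : H, F (t * x) ∂ν := by
  obtain ⟨c, hc⟩ :=
    exists_integral_comp_continuousMulEquiv_eq_smul ν (MulAut.continuousConjNormal H x)
  refine ⟨c, fun F hF hFc => ?_⟩
  have := hc (fun t : H => F (t * x)) (by fun_prop) (hFc.comp_subtype_mul_right hHc x)
  simpa [MulAut.continuousConjNormal, MulAut.conjNormal_apply, mul_assoc] using this

end Subgroup

section Coset

variable {G : Type*} [Group G]

theorem integral_out_mul_eq {H : Subgroup G} [MeasurableSpace H] [MeasurableMul H]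
    (ν : Measure H) [ν.IsMulLeftInvariant] {E : Type*} [NormedAddCommGroup E] [NormedSpace ℝ E]
    (F : G → E) (x : G) :
    ∫ t : H, F ((x : G ⧸ H).out * t) ∂ν = ∫ t : H, F (x * t) ∂ν := by
  obtain ⟨h, hh⟩ := QuotientGroup.mk_out_eq_mul H x
  simp only [hh, mul_assoc, ← Subgroup.coe_mul]
  exact integral_mul_left_eq_self (fun t : H => F (x * t)) h

variable [TopologicalSpace G] [MeasurableSpace G]

theorem integral_nonneg_of_forall_integral_coset_nonneg {H : Subgroup G} [MeasurableSpace H]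
    [MeasurableMul H] (μ : Measure G) (ν : Measure H) [ν.IsMulLeftInvariant]
    [MeasurableSpace (G ⧸ H)] (ρ : Measure (G ⧸ H))
    (hcompat : ∀ f : G → ℂ, Continuous f → HasCompactSupport f →
      ∀ g : G ⧸ H → ℂ, (∀ x : G, g (QuotientGroup.mk x) = ∫ t : ↥H, f (x * ↑t) ∂ν) →
        ∫ x, f x ∂μ = ∫ q, g q ∂ρ)
    {F : G → ℝ} (hF : Continuous F) (hFc : HasCompactSupport F)
    (hfiber : ∀ x, 0 ≤ ∫ t : H, F (x * t) ∂ν) : 0 ≤ ∫ x, F x ∂μ := by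
  have hquot := hcompat (fun x => F x) (by fun_prop) (hFc.comp_left Complex.ofReal_zero)
    (fun q => ((∫ t : H, F (q.out * t) ∂ν : ℝ) : ℂ))
    (fun x => by rw [integral_out_mul_eq, integral_complex_ofReal])
  rw [integral_complex_ofReal, integral_complex_ofReal, Complex.ofReal_inj] at hquot
  exact hquot ▸ integral_nonneg fun q => hfiber q.out

end Coset

theorem integral_le_of_forall_integral_mul_right_le {G : Type*} [Group G] [TopologicalSpace G]
    [IsTopologicalGroup G] [MeasurableSpace G] [BorelSpace G] {H : Subgroup G}
    (hHc : IsClosed (H : Set G)) [H.Normal] [MeasurableSpace H] [BorelSpace H]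
    (ν : Measure H) [ν.IsHaarMeasure] (μ : Measure G) [IsFiniteMeasureOnCompacts μ]
    [MeasurableSpace (G ⧸ H)] (ρ : Measure (G ⧸ H))
    (hcompat : ∀ f : G → ℂ, Continuous f → HasCompactSupport f →
      ∀ g : G ⧸ H → ℂ, (∀ x : G, g (QuotientGroup.mk x) = ∫ t : ↥H, f (x * ↑t) ∂ν) →
        ∫ x, f x ∂μ = ∫ q, g q ∂ρ)
    {F₁ F₂ : G → ℝ} (hF₁ : Continuous F₁) (hF₁c : HasCompactSupport F₁)
    (hF₂ : Continuous F₂) (hF₂c : HasCompactSupport F₂)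
    (hle : ∀ x, ∫ t : H, F₁ (t * x) ∂ν ≤ ∫ t : H, F₂ (t * x) ∂ν) :
    ∫ x, F₁ x ∂μ ≤ ∫ x, F₂ x ∂μ := by
  have hintegrable : ∀ F : G → ℝ, Continuous F → HasCompactSupport F → ∀ x : G,
      Integrable (fun t : H => F (t * x)) ν := fun F hF hFc x =>
    (hF.comp (by fun_prop)).integrable_of_hasCompactSupport (hFc.comp_subtype_mul_right hHc x)
  have hsub := integral_nonneg_of_forall_integral_coset_nonneg μ ν ρ hcompat (hF₂.sub hF₁)
    (hF₂c.sub hF₁c) fun x => ?_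
  · rwa [integral_sub' (hF₂.integrable_of_hasCompactSupport hF₂c)
      (hF₁.integrable_of_hasCompactSupport hF₁c), sub_nonneg] at hsub
  obtain ⟨c, hc⟩ := exists_integral_mul_left_eq_smul_integral_mul_right hHc ν x
  rw [hc _ (hF₂.sub hF₁) (hF₂c.sub hF₁c)]
  refine smul_nonneg c.2 ?_
  rw [Pi.sub_def, integral_sub (hintegrable F₂ hF₂ hF₂c x) (hintegrable F₁ hF₁ hF₁c x),
    sub_nonneg]
  exact hle x

theorem stmt18_general {G : Type*} [Group G] [TopologicalSpace G] [IsTopologicalGroup G]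
    [MeasurableSpace G] [BorelSpace G]
    (μ : Measure G) [μ.IsHaarMeasure]
    (H : Subgroup G) (hHc : IsClosed (H : Set G)) (hHn : H.Normal)
    [MeasurableSpace ↥H] [BorelSpace ↥H] (ν : Measure ↥H) [ν.IsHaarMeasure]
    [MeasurableSpace (G ⧸ H)] (ρ : Measure (G ⧸ H))
    (hcompat : ∀ f : G → ℂ, Continuous f → HasCompactSupport f →
      ∀ g : G ⧸ H → ℂ, (∀ x : G, g (QuotientGroup.mk x) = ∫ t : ↥H, f (x * ↑t) ∂ν) →
        ∫ x, f x ∂μ = ∫ q, g q ∂ρ)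
    (f : ↥H → ℂ) (hf : Continuous f) (hfc : HasCompactSupport f)
    (ξ : G → ℂ) (hξ : Continuous ξ) (hξc : HasCompactSupport ξ)
    (C : ℝ)
    (hCbound : ∀ η : ↥H → ℂ, Continuous η → HasCompactSupport η →
      ∫ h, ‖∫ t, f t * η (t⁻¹ * h) ∂ν‖ ^ 2 ∂ν ≤ C ^ 2 * ∫ h, ‖η h‖ ^ 2 ∂ν) :
    ∫ s, ‖∫ t : ↥H, f t * ξ ((↑t)⁻¹ * s) ∂ν‖ ^ 2 ∂μ ≤ C ^ 2 * ∫ s, ‖ξ s‖ ^ 2 ∂μ := by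
  have := hHn
  have hTξ := continuous_integral_mul_inv_mul ν hf hfc hξ
  have hTξc := hasCompactSupport_integral_mul_inv_mul ν hfc hξc
  rw [← integral_const_mul]
  refine integral_le_of_forall_integral_mul_right_le hHc ν μ ρ hcompat (hTξ.norm.pow 2)
    (hTξc.comp_left (g := fun z : ℂ => ‖z‖ ^ 2) (by simp)) (by fun_prop)
    (hξc.comp_left (g := fun z : ℂ => C ^ 2 * ‖z‖ ^ 2) (by simp)) fun x => ?_
  rw [integral_const_mul]
  simpa only [Subgroup.coe_mul, Subgroup.coe_inv, mul_assoc] using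
    hCbound _ (by fun_prop) (hξc.comp_subtype_mul_right hHc x)

/-- Let `G` be a locally compact Hausdorff group, `H` a closed
normal subgroup, `μ` a left Haar measure on `G`, `ν` a left Haar measure on `H` and
`ρ` a measure on `G/H`, normalized so that `∫_G f dμ = ∫_{G/H} ∫_H f (t s) dν s dρ`
for continuous compactly supported `f`. Then for `f ∈ C_c(H)` and `ξ ∈ C_c(G) ⊆
L²(G)`, `‖λ^G(f) ξ‖ ≤ ‖λ^H(f)‖ ‖ξ‖`: if `C ≥ 0` bounds the integrated form of `λ^H`
at `f` (as an operator on `L²(H)`, tested on `C_c(H)`), then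
`‖∫_H f t · (λ^G_t ξ) dν t‖_{L²(μ)} ≤ C ‖ξ‖_{L²(μ)}` (stated with squared norms). -/
theorem stmt18 {G : Type*} [Group G] [TopologicalSpace G] [IsTopologicalGroup G]
    [LocallyCompactSpace G] [T2Space G] [MeasurableSpace G] [BorelSpace G]
    (μ : Measure G) [μ.IsHaarMeasure]
    (H : Subgroup G) (hHc : IsClosed (H : Set G)) (hHn : H.Normal)
    [MeasurableSpace ↥H] [BorelSpace ↥H] (ν : Measure ↥H) [ν.IsHaarMeasure]
    [MeasurableSpace (G ⧸ H)] (ρ : Measure (G ⧸ H))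
    (hcompat : ∀ f : G → ℂ, Continuous f → HasCompactSupport f →
      ∀ g : G ⧸ H → ℂ, (∀ x : G, g (QuotientGroup.mk x) = ∫ t : ↥H, f (x * ↑t) ∂ν) →
        ∫ x, f x ∂μ = ∫ q, g q ∂ρ)
    (f : ↥H → ℂ) (hf : Continuous f) (hfc : HasCompactSupport f)
    (ξ : G → ℂ) (hξ : Continuous ξ) (hξc : HasCompactSupport ξ)
    (C : ℝ) (hC : 0 ≤ C)
    (hCbound : ∀ η : ↥H → ℂ, Continuous η → HasCompactSupport η →
      ∫ h, ‖∫ t, f t * η (t⁻¹ * h) ∂ν‖ ^ 2 ∂ν ≤ C ^ 2 * ∫ h, ‖η h‖ ^ 2 ∂ν) :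
    ∫ s, ‖∫ t : ↥H, f t * ξ ((↑t)⁻¹ * s) ∂ν‖ ^ 2 ∂μ ≤ C ^ 2 * ∫ s, ‖ξ s‖ ^ 2 ∂μ :=
  stmt18_general μ H hHc hHn ν ρ hcompat f hf hfc ξ hξ hξc C hCbound
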